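/- For every integer d ≥ 1 there exist constants c_d, C_d > 0 such that for every mean-zero Gaussian random vector (Z_1, …, Z_d) with values in ℝ^d in which each coordinate has strictly positive variance, c_d · ∏_{j=1}^d √(Var Z_j) ≤ E[ |Z_1| ⋯ |Z_d| ] ≤ C_d · ∏_{j=1}^d √(Var Z_j). -/

import Mathlib

open MeasureTheory ProbabilityTheory Real Finset
open scoped NNReal ENNReal

/-!
Only the one-dimensional marginals matter. Normalise each coordinate to a standard Gaussian
`Yⱼ = Zⱼ / σⱼ`. The upper bound is AM–GM, `∏ⱼ |Yⱼ| ≤ d⁻¹ ∑ⱼ |Yⱼ| ^ d`, which gives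
`E ∏ⱼ |Yⱼ| ≤ E |N(0,1)| ^ d`. For the lower bound, the standard Gaussian density is at most `1/2`,
so `P(|Yⱼ| ≤ ε) ≤ ε`; with `ε = 1/(2d)` a union bound shows that with probability at least `1/2`
every `|Yⱼ|` exceeds `ε`, hence `E ∏ⱼ |Yⱼ| ≥ ε ^ d / 2`.
-/

lemma prod_le_inv_card_mul_sum_pow {ι : Type*} [Fintype ι] [Nonempty ι] {x : ι → ℝ}
    (hx : ∀ i, 0 ≤ x i) :
    ∏ i, x i ≤ (Fintype.card ι : ℝ)⁻¹ * ∑ i, x i ^ Fintype.card ι := by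
  set n := Fintype.card ι
  have hn : (n : ℝ) ≠ 0 := Nat.cast_ne_zero.2 Fintype.card_ne_zero
  have := geom_mean_le_arith_mean_weighted univ (fun _ ↦ (n : ℝ)⁻¹) (fun i ↦ x i ^ n)
    (fun _ _ ↦ by positivity) (by simp [n, hn]) (fun i _ ↦ pow_nonneg (hx i) n)
  simpa [← rpow_natCast, ← rpow_mul (hx _), hn, mul_sum] using this

section NonnegProduct

variable {Ω ι : Type*} {mΩ : MeasurableSpace Ω} {μ : Measure Ω} [Fintype ι] {f : ι → Ω → ℝ}

lemma integral_prod_le_of_integral_pow_le [Nonempty ι] (hf : ∀ i ω, 0 ≤ f i ω)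
    (hmeas : ∀ i, AEStronglyMeasurable (f i) μ)
    (hint : ∀ i, Integrable (fun ω ↦ f i ω ^ Fintype.card ι) μ) {M : ℝ}
    (hM : ∀ i, ∫ ω, f i ω ^ Fintype.card ι ∂μ ≤ M) :
    Integrable (fun ω ↦ ∏ i, f i ω) μ ∧ ∫ ω, ∏ i, f i ω ∂μ ≤ M := by
  set n := Fintype.card ι
  have hamgm (ω : Ω) : ∏ i, f i ω ≤ (n : ℝ)⁻¹ * ∑ i, f i ω ^ n :=
    prod_le_inv_card_mul_sum_pow fun i ↦ hf i ω
  have hbound : Integrable (fun ω ↦ (n : ℝ)⁻¹ * ∑ i, f i ω ^ n) μ :=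
    (integrable_finsetSum _ fun i _ ↦ hint i).const_mul _
  have hprod : Integrable (fun ω ↦ ∏ i, f i ω) μ :=
    hbound.mono' (Finset.aestronglyMeasurable_fun_prod _ fun i _ ↦ hmeas i) <| ae_of_all _ fun ω ↦ by
      rw [norm_of_nonneg (prod_nonneg fun i _ ↦ hf i ω)]
      exact hamgm ω
  refine ⟨hprod, ?_⟩
  calc ∫ ω, ∏ i, f i ω ∂μ ≤ ∫ ω, (n : ℝ)⁻¹ * ∑ i, f i ω ^ n ∂μ := integral_mono hprod hbound hamgm
    _ = (n : ℝ)⁻¹ * ∑ i, ∫ ω, f i ω ^ n ∂μ := by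
      rw [integral_const_mul, integral_finsetSum _ fun i _ ↦ hint i]
    _ ≤ (n : ℝ)⁻¹ * ∑ _i : ι, M := by gcongr with i; exact hM i
    _ = M := by simp [n, Fintype.card_ne_zero]

lemma le_integral_prod_of_sum_measure_le [IsProbabilityMeasure μ] (hf : ∀ i ω, 0 ≤ f i ω)
    (hint : Integrable (fun ω ↦ ∏ i, f i ω) μ) {a : ℝ} (ha : 0 ≤ a)
    (hsmall : ∑ i, μ {ω | f i ω ≤ a} ≤ 2⁻¹) :
    2⁻¹ * a ^ Fintype.card ι ≤ ∫ ω, ∏ i, f i ω ∂μ := by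
  set A := {ω | ∀ i, a < f i ω}
  have hAc : μ Aᶜ ≤ 2⁻¹ := calc
    μ Aᶜ ≤ μ (⋃ i, {ω | f i ω ≤ a}) := measure_mono fun ω hω ↦ by simpa [A] using hω
    _ ≤ ∑ i, μ {ω | f i ω ≤ a} := measure_iUnion_fintype_le μ _
    _ ≤ 2⁻¹ := hsmall
  have hA : 2⁻¹ ≤ μ A := by
    have := measure_univ_le_add_compl (μ := μ) A
    rw [measure_univ] at this
    calc (2⁻¹ : ℝ≥0∞) = 1 - 2⁻¹ := by norm_num
      _ ≤ 1 - μ Aᶜ := tsub_le_tsub_left hAc 1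
      _ ≤ μ A := tsub_le_iff_right.2 this
  have hAsub : A ⊆ {ω | a ^ Fintype.card ι ≤ ∏ i, f i ω} := fun ω hω ↦ by
    simpa using Finset.prod_le_prod (s := univ) (fun _ _ ↦ ha) fun i _ ↦ (hω i).le
  calc 2⁻¹ * a ^ Fintype.card ι ≤ a ^ Fintype.card ι * μ.real A := by
        rw [mul_comm]
        gcongr
        simpa [measureReal_def] using ENNReal.toReal_mono (measure_ne_top μ A) hA
    _ ≤ a ^ Fintype.card ι * μ.real {ω | a ^ Fintype.card ι ≤ ∏ i, f i ω} := by
        gcongr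
        exact measure_ne_top μ _
    _ ≤ ∫ ω, ∏ i, f i ω ∂μ :=
        mul_meas_ge_le_integral_of_nonneg (ae_of_all _ fun ω ↦ prod_nonneg fun i _ ↦ hf i ω) hint _

end NonnegProduct

section Gaussian

lemma gaussianPDFReal_le_inv_sqrt (μ : ℝ) (v : ℝ≥0) (x : ℝ) :
    gaussianPDFReal μ v x ≤ (√(2 * π * v))⁻¹ :=
  mul_le_of_le_one_right (by positivity) <| exp_le_one_iff.2 <| by
    rw [neg_div]; exact neg_nonpos.2 (by positivity)

lemma gaussianReal_le_ofReal_mul_volume (μ : ℝ) {v : ℝ≥0} (hv : v ≠ 0) (s : Set ℝ) :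
    gaussianReal μ v s ≤ ENNReal.ofReal (√(2 * π * v))⁻¹ * volume s := by
  rw [gaussianReal_apply μ hv s, ← setLIntegral_const]
  exact lintegral_mono fun x ↦ ENNReal.ofReal_le_ofReal (gaussianPDFReal_le_inv_sqrt μ v x)

lemma gaussianReal_setOf_abs_le_le {s : ℝ} (hs : 0 ≤ s) :
    gaussianReal 0 1 {x | |x| ≤ s} ≤ ENNReal.ofReal s := by
  have hπ : 2 ≤ √(2 * π) := le_sqrt_of_sq_le (by nlinarith [pi_gt_three])
  have hIcc : {x : ℝ | |x| ≤ s} = Set.Icc (-s) s := by ext; simp [abs_le]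
  calc gaussianReal 0 1 {x | |x| ≤ s}
      ≤ ENNReal.ofReal (√(2 * π * (1 : ℝ≥0)))⁻¹ * volume (Set.Icc (-s) s) :=
        hIcc ▸ gaussianReal_le_ofReal_mul_volume 0 one_ne_zero _
    _ = ENNReal.ofReal (2 * s / √(2 * π)) := by
        rw [volume_Icc, ← ENNReal.ofReal_mul (by positivity), NNReal.coe_one, mul_one]
        ring_nf
    _ ≤ ENNReal.ofReal s := by
        gcongr
        rw [div_le_iff₀ (by positivity)]
        nlinarith

lemma gaussianReal_div_sqrt {Ω : Type*} {mΩ : MeasurableSpace Ω} {P : Measure Ω} {X : Ω → ℝ}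
    {v : ℝ≥0} (hX : HasLaw X (gaussianReal 0 v) P) (hv : v ≠ 0) :
    HasLaw (fun ω ↦ X ω / √v) (gaussianReal 0 1) P := by
  convert gaussianReal_div_const hX √v using 2
  · simp
  · ext
    simp [hv]

end Gaussian

section StandardGaussianCoordinates

variable {Ω ι : Type*} {mΩ : MeasurableSpace Ω} {P : Measure Ω} [Fintype ι] {Z : ι → Ω → ℝ}

lemma integral_prod_abs_le_of_hasLaw_gaussianReal [Nonempty ι]
    (hZ : ∀ i, HasLaw (Z i) (gaussianReal 0 1) P) :
    Integrable (fun ω ↦ ∏ i, |Z i ω|) P ∧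
      ∫ ω, ∏ i, |Z i ω| ∂P ≤ ∫ x, |x| ^ Fintype.card ι ∂gaussianReal 0 1 := by
  have hmom : Integrable (fun x : ℝ ↦ |x| ^ Fintype.card ι) (gaussianReal 0 1) :=
    (memLp_id_gaussianReal (Fintype.card ι)).integrable_norm_pow Fintype.card_ne_zero
  refine integral_prod_le_of_integral_pow_le (fun i ω ↦ abs_nonneg _)
    (fun i ↦ (hZ i).aemeasurable.abs.aestronglyMeasurable) (fun i ↦ ?_) (fun i ↦ ?_)
  · exact ((hZ i).map_eq ▸ hmom).comp_aemeasurable (hZ i).aemeasurable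
  · exact ((hZ i).integral_comp hmom.aestronglyMeasurable).le

lemma le_integral_prod_abs_of_hasLaw_gaussianReal [IsProbabilityMeasure P]
    (hZ : ∀ i, HasLaw (Z i) (gaussianReal 0 1) P) (hint : Integrable (fun ω ↦ ∏ i, |Z i ω|) P) :
    2⁻¹ * (2 * Fintype.card ι : ℝ)⁻¹ ^ Fintype.card ι ≤ ∫ ω, ∏ i, |Z i ω| ∂P := by
  set ε : ℝ := (2 * Fintype.card ι)⁻¹
  refine le_integral_prod_of_sum_measure_le (fun i ω ↦ abs_nonneg _) hint (by positivity) ?_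
  calc ∑ i, P {ω | |Z i ω| ≤ ε} = ∑ _i : ι, gaussianReal 0 1 {x | |x| ≤ ε} := by
        refine sum_congr rfl fun i _ ↦ (hZ i).measure_eq (p := fun x ↦ |x| ≤ ε) ?_
        exact measurableSet_le measurable_abs measurable_const
    _ ≤ ∑ _i : ι, ENNReal.ofReal ε := by gcongr; exact gaussianReal_setOf_abs_le_le (by positivity)
    _ = ENNReal.ofReal (Fintype.card ι * ε) := by simp [ENNReal.ofReal_mul]
    _ ≤ ENNReal.ofReal 2⁻¹ := by
        gcongr
        rcases eq_or_ne (Fintype.card ι : ℝ) 0 with h | h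
        · simp [h]
        · simp [ε, field]
    _ = 2⁻¹ := by simp

end StandardGaussianCoordinates

theorem statement8 (d : ℕ) (hd : 1 ≤ d) :
    ∃ c C : ℝ, 0 < c ∧ 0 < C ∧
      ∀ ν : Measure (Fin d → ℝ), IsProbabilityMeasure ν →
        (∀ l : (Fin d → ℝ) →ₗ[ℝ] ℝ, ∃ σ : NNReal,
          Measure.map (fun v => l v) ν = gaussianReal 0 σ) →
        (∀ j : Fin d, 0 < variance (fun v => v j) ν) →
        (c * ∏ j : Fin d, Real.sqrt (variance (fun v => v j) ν)
            ≤ ∫ v, ∏ j : Fin d, |v j| ∂ν) ∧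
        (∫ v, ∏ j : Fin d, |v j| ∂ν
            ≤ C * ∏ j : Fin d, Real.sqrt (variance (fun v => v j) ν)) := by
  have : Nonempty (Fin d) := ⟨⟨0, hd⟩⟩
  set M := ∫ x, |x| ^ d ∂gaussianReal 0 1
  refine ⟨2⁻¹ * (2 * d : ℝ)⁻¹ ^ d, M + 1, by positivity, by positivity,
    fun ν _ hgauss hvar ↦ ?_⟩
  have hlaw (j : Fin d) : ∃ w : ℝ≥0, HasLaw (fun v : Fin d → ℝ ↦ v j) (gaussianReal 0 w) ν :=
    (hgauss (LinearMap.proj j)).imp fun _ hw ↦ ⟨(measurable_pi_apply j).aemeasurable, hw⟩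
  choose w hw using hlaw
  have hvar_eq (j : Fin d) : variance (fun v ↦ v j) ν = w j := by
    rw [(hw j).variance_eq, variance_id_gaussianReal]
  have hw0 (j : Fin d) : w j ≠ 0 := fun h ↦ by simpa [hvar_eq, h] using hvar j
  have hstd (j : Fin d) := gaussianReal_div_sqrt (hw j) (hw0 j)
  have hfactor : (fun v : Fin d → ℝ ↦ ∏ j, |v j|) =
      fun v ↦ (∏ j, √(w j : ℝ)) * ∏ j, |v j / √(w j : ℝ)| := by
    ext v
    rw [← prod_mul_distrib]
    refine prod_congr rfl fun j _ ↦ ?_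
    rw [abs_div, abs_of_nonneg (sqrt_nonneg _), mul_div_cancel₀]
    simpa using hw0 j
  obtain ⟨hint, hupper⟩ := integral_prod_abs_le_of_hasLaw_gaussianReal hstd
  have hlower := le_integral_prod_abs_of_hasLaw_gaussianReal hstd hint
  rw [Fintype.card_fin] at hlower hupper
  simp only [hvar_eq]
  rw [hfactor, integral_const_mul]
  have hσ : 0 ≤ ∏ j, √(w j : ℝ) := by positivity
  constructor <;> nlinarith
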